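/- Let $\Omega = \{(x', t) : x' \in \mathbb{R}^{n-1}, t > \psi(x')\}$ be a Lipschitz graph domain, where $\psi : \mathbb{R}^{n-1} \to \mathbb{R}$ is Lipschitz. For each cube $Q \subset \mathbb{R}^{n-1}$ with side length $\ell(Q)$, define $W(Q) = \{(x', t) : x' \in Q, \psi(x') + 4\ell(Q) < t < \psi(x') + 8\ell(Q)\}$. Let $\mathcal{H}_j$ be the collection of open dyadic cubes in $\mathbb{R}^{n-1}$ of side length $2^j$ with vertices at integer multiples of $2^j$, and $\mathcal{H} = \bigcup_{j \in \mathbb{Z}} \mathcal{H}_j$. Then: (a) if $Q, R \in \mathcal{H}$ with $Q \neq R$, then $W(Q) \cap W(R) = \emptyset$; and (b) $\Omega = \bigcup_{Q \in \mathcal{H}} \overline{W(Q)}$. -/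

import Mathlib

/-- The open dyadic cube of generation `j` indexed by `m ∈ ℤ^n`. -/
def dyCube (n : ℕ) (j : ℤ) (m : Fin n → ℤ) : Set (EuclideanSpace ℝ (Fin n)) :=
  {y | ∀ i, (m i : ℝ) * 2 ^ j < y i ∧ y i < ((m i : ℝ) + 1) * 2 ^ j}

/-- The Whitney-type region `W(Q) = {(x',t) : x' ∈ Q, ψ(x') + 4ℓ(Q) < t < ψ(x') + 8ℓ(Q)}`
over the dyadic cube `Q` of side length `2^j`. -/
def Wreg {n : ℕ} (ψ : EuclideanSpace ℝ (Fin n) → ℝ) (j : ℤ) (m : Fin n → ℤ) :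
    Set (EuclideanSpace ℝ (Fin n) × ℝ) :=
  {p | p.1 ∈ dyCube n j m ∧ ψ p.1 + 4 * 2 ^ j < p.2 ∧ p.2 < ψ p.1 + 8 * 2 ^ j}

/-! The height bands `4·2^j ≤ t - ψ x' < 8·2^j` tile `(0, ∞)` and distinct generations give
disjoint open bands, since `8·2^j ≤ 4·2^(j+1)`; within one generation the open dyadic cubes are
disjoint and the half-open ones tile the base. A point whose base lies on a face of its half-open
cube is the limit of points pushed diagonally into the open cube at the same height above the
graph, which is where continuity of `ψ` enters. -/

open Filter Topology

def dyCubeIco (n : ℕ) (j : ℤ) (m : Fin n → ℤ) : Set (EuclideanSpace ℝ (Fin n)) :=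
  {y | ∀ i, (m i : ℝ) * 2 ^ j ≤ y i ∧ y i < ((m i : ℝ) + 1) * 2 ^ j}

section DyadicCube

variable {n : ℕ} {j : ℤ}

lemma dyCube_disjoint {m m' : Fin n → ℤ} (h : m ≠ m') :
    Disjoint (dyCube n j m) (dyCube n j m') := by
  obtain ⟨i, hi⟩ := Function.ne_iff.mp h
  have step : ∀ p q : ℤ, p < q → ((p : ℝ) + 1) * 2 ^ j ≤ q * 2 ^ j := fun p q hpq =>
    mul_le_mul_of_nonneg_right (by exact_mod_cast hpq) (zpow_pos two_pos j).le
  rw [Set.disjoint_left]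
  intro y hy hy'
  rcases hi.lt_or_gt with h | h
  · linarith [(hy i).2, (hy' i).1, step _ _ h]
  · linarith [(hy' i).2, (hy i).1, step _ _ h]

lemma exists_mem_dyCubeIco (j : ℤ) (x : EuclideanSpace ℝ (Fin n)) :
    ∃ m, x ∈ dyCubeIco n j m := by
  have h2 : (0 : ℝ) < 2 ^ j := zpow_pos two_pos j
  refine ⟨fun i => ⌊x i / 2 ^ j⌋, fun i => ⟨?_, ?_⟩⟩
  · exact (le_div_iff₀ h2).mp (Int.floor_le _)
  · exact (div_lt_iff₀ h2).mp (Int.lt_floor_add_one _)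

lemma eventually_add_smul_mem_dyCube {m : Fin n → ℤ} {x : EuclideanSpace ℝ (Fin n)}
    (hx : x ∈ dyCubeIco n j m) :
    ∀ᶠ ε in 𝓝[>] (0 : ℝ), x + ε • WithLp.toLp 2 (fun _ => (1 : ℝ)) ∈ dyCube n j m := by
  have hupper : ∀ᶠ ε in 𝓝[>] (0 : ℝ), ∀ i, x i + ε < ((m i : ℝ) + 1) * 2 ^ j :=
    eventually_all.2 fun i => nhdsWithin_le_nhds <|
      eventually_lt_nhds (sub_pos.2 (hx i).2) |>.mono fun ε hε => by linarith
  filter_upwards [self_mem_nhdsWithin, hupper] with ε (hε : 0 < ε) hupper i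
  simp only [PiLp.add_apply, PiLp.smul_apply, smul_eq_mul, mul_one]
  exact ⟨by linarith [(hx i).1], hupper i⟩

end DyadicCube

lemma exists_zpow_two_band {δ : ℝ} (hδ : 0 < δ) : ∃ j : ℤ, 4 * 2 ^ j ≤ δ ∧ δ < 8 * 2 ^ j := by
  obtain ⟨j, hj, hj'⟩ := exists_mem_Ico_zpow (by positivity : (0 : ℝ) < δ / 4) one_lt_two
  rw [zpow_add_one₀ two_ne_zero] at hj'
  exact ⟨j, by linarith, by linarith⟩

section Whitney

variable {n : ℕ} {ψ : EuclideanSpace ℝ (Fin n) → ℝ}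

lemma Wreg_disjoint_of_lt {j j' : ℤ} (m m' : Fin n → ℤ) (h : j < j') :
    Disjoint (Wreg ψ j m) (Wreg ψ j' m') := by
  have hscale : (8 : ℝ) * 2 ^ j ≤ 4 * 2 ^ j' := by
    have : (2 : ℝ) ^ (j + 1) ≤ 2 ^ j' := zpow_le_zpow_right₀ one_le_two h
    rw [zpow_add_one₀ two_ne_zero] at this
    linarith
  rw [Set.disjoint_left]
  rintro p ⟨-, -, hp⟩ ⟨-, hp', -⟩
  linarith

lemma Wreg_disjoint_of_ne {j j' : ℤ} {m m' : Fin n → ℤ} (h : (j, m) ≠ (j', m')) :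
    Disjoint (Wreg ψ j m) (Wreg ψ j' m') := by
  rcases lt_trichotomy j j' with hj | rfl | hj
  · exact Wreg_disjoint_of_lt m m' hj
  · exact ((dyCube_disjoint (by simpa using h)).preimage Prod.fst).mono
      (fun _ hp => hp.1) (fun _ hp => hp.1)
  · exact (Wreg_disjoint_of_lt m' m hj).symm

variable (hψ : Continuous ψ)
include hψ

lemma closure_Wreg_subset (j : ℤ) (m : Fin n → ℤ) :
    closure (Wreg ψ j m) ⊆ {p | ψ p.1 + 4 * 2 ^ j ≤ p.2} :=
  closure_minimal (fun _ hp => hp.2.1.le) <|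
    isClosed_le ((hψ.comp continuous_fst).add continuous_const) continuous_snd

lemma mem_closure_Wreg {j : ℤ} {m : Fin n → ℤ} {x : EuclideanSpace ℝ (Fin n)} {t : ℝ}
    (hx : x ∈ dyCubeIco n j m) (h4 : 4 * 2 ^ j ≤ t - ψ x) (h8 : t - ψ x < 8 * 2 ^ j) :
    (x, t) ∈ closure (Wreg ψ j m) := by
  let u : EuclideanSpace ℝ (Fin n) := WithLp.toLp 2 (fun _ => 1)
  let g : ℝ → EuclideanSpace ℝ (Fin n) × ℝ := fun ε => (x + ε • u, ψ (x + ε • u) + (t - ψ x) + ε)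
  have hg : Tendsto g (𝓝[>] 0) (𝓝 (x, t)) := by
    have hcont : Continuous g := by fun_prop
    simpa [g] using (hcont.tendsto 0).mono_left nhdsWithin_le_nhds
  have hheight : ∀ᶠ ε in 𝓝[>] (0 : ℝ), t - ψ x + ε < 8 * 2 ^ j :=
    nhdsWithin_le_nhds <| eventually_lt_nhds (sub_pos.2 h8) |>.mono fun ε hε => by linarith
  refine mem_closure_of_tendsto hg ?_
  filter_upwards [self_mem_nhdsWithin, eventually_add_smul_mem_dyCube hx, hheight]
    with ε (hε : 0 < ε) hcube hheight
  exact ⟨hcube, by simp only [g]; linarith, by simp only [g]; linarith⟩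

lemma setOf_lt_eq_iUnion_closure_Wreg :
    {p : EuclideanSpace ℝ (Fin n) × ℝ | ψ p.1 < p.2} =
      ⋃ (j : ℤ), ⋃ (m : Fin n → ℤ), closure (Wreg ψ j m) := by
  ext ⟨x, t⟩
  simp only [Set.mem_ofPred_eq, Set.mem_iUnion]
  constructor
  · intro ht
    obtain ⟨j, h4, h8⟩ := exists_zpow_two_band (sub_pos.2 ht)
    obtain ⟨m, hm⟩ := exists_mem_dyCubeIco j x
    exact ⟨j, m, mem_closure_Wreg hψ hm h4 h8⟩
  · rintro ⟨j, m, hp⟩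
    have : ψ x + 4 * 2 ^ j ≤ t := closure_Wreg_subset hψ j m hp
    linarith [zpow_pos (two_pos : (0 : ℝ) < 2) j]

end Whitney

/-- In a Lipschitz graph domain, the regions `W(Q)` over distinct dyadic cubes are pairwise
disjoint, and the closures of the `W(Q)` cover the domain. -/
theorem stmt_8 (n : ℕ) (K : NNReal) (ψ : EuclideanSpace ℝ (Fin (n - 1)) → ℝ)
    (hψ : LipschitzWith K ψ) :
    (∀ (j j' : ℤ) (m m' : Fin (n - 1) → ℤ), (j, m) ≠ (j', m') →
        Disjoint (Wreg ψ j m) (Wreg ψ j' m')) ∧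
      {p : EuclideanSpace ℝ (Fin (n - 1)) × ℝ | ψ p.1 < p.2}
        = ⋃ (j : ℤ), ⋃ (m : Fin (n - 1) → ℤ), closure (Wreg ψ j m) :=
  ⟨fun _ _ _ _ h => Wreg_disjoint_of_ne h, setOf_lt_eq_iUnion_closure_Wreg hψ.continuous⟩
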